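/- arXiv:1510.02637 — 2 statements merged into one kernel-verified Lean document; each statement's English description precedes it below -/
import Mathlib

section
/- Let n ≥ 1 and let λ₁ and λ₂ be Lyndon words over Σ whose lengths divide n. If λ₁ < λ₂ in the lexicographic order, then λ₁^(n/|λ₁|) < λ₂^(n/|λ₂|) in the lexicographic order. -/
/-
A Lyndon word `w = p ++ s` (with `p`, `s` nonempty) is smaller than its suffix `s`: self-minimality
gives `w ≤ s ++ p`, which forces `w < s` unless `s` is a prefix of `w`, and in that case comparing
`w` with two of its rotations yields `p ++ s = s ++ p`, so `w` is a proper power.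

Let `u < v` with `v` Lyndon. If `u` is not a prefix of `v`, the first difference lies inside `u`
and survives in `u^a < v^b`. If `v = u ++ z`, then `v < z`, so by induction `u^a < v` (from
`u^a < v < z` one gets `u ++ u^a < u ++ z = v`), whence `u^a < v ≤ v^b`.
-/

namespace Lyndon

variable {α : Type*}

/-- `rot w c` is the cyclic rotation of `w` obtained by moving its first `c mod |w|`
letters to the end. -/
def rot (w : List α) (c : ℕ) : List α :=
  w.drop (c % w.length) ++ w.take (c % w.length)

/-- `power w k` is the concatenation of `k` copies of `w`. -/
def power (w : List α) (k : ℕ) : List α := (List.replicate k w).flatten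

/-- `minrot w` is the lexicographically minimal cyclic rotation of `w`. -/
def minrot [LinearOrder α] (w : List α) : List α :=
  ((List.range w.length).map (rot w)).foldr min w

/-- A word is self-minimal if it equals its minimal cyclic rotation. -/
def SelfMinimal [LinearOrder α] (w : List α) : Prop := minrot w = w

/-- A word is primitive if it is a `k`-th power (for a positive integer `k`)
only of itself. -/
def Primitive (w : List α) : Prop :=
  ∀ (u : List α) (k : ℕ), 0 < k → w = power u k → u = w

/-- A Lyndon word is a nonempty word that is primitive and self-minimal. -/
def IsLyndon [LinearOrder α] (w : List α) : Prop :=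
  w ≠ [] ∧ Primitive w ∧ SelfMinimal w

/-- `Pref₋(w)`: the words `w_(i)·s` for `0 ≤ i ≤ n-1` and a letter `s < w[i+1]`,
together with `w` itself. -/
def PrefMinus [LinearOrder α] (w : List α) : Set (List α) :=
  {y | (∃ i : Fin w.length, ∃ s : α, s < w.get i ∧ y = w.take i ++ [s]) ∨ y = w}

/-- `L(w)`: the words containing a factor (contiguous subword) from `Pref₋(w)`. -/
def InL [LinearOrder α] (w x : List α) : Prop :=
  ∃ y ∈ PrefMinus w, y <:+: x

lemma power_succ (w : List α) (k : ℕ) : power w (k + 1) = w ++ power w k := by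
  simp [power, List.replicate_succ]

@[simp] lemma power_nil (k : ℕ) : power ([] : List α) k = [] := by
  simp [power]

lemma power_add (w : List α) (a b : ℕ) : power w (a + b) = power w a ++ power w b := by
  simp [power, ← List.replicate_append_replicate]

lemma length_power (w : List α) (k : ℕ) : (power w k).length = k * w.length := by
  simp [power, List.length_flatten]

lemma exists_power_of_append_comm (p s : List α) (h : p ++ s = s ++ p) :
    ∃ (r : List α) (a b : ℕ), p = power r a ∧ s = power r b := by
  rcases eq_or_ne p [] with rfl | hp
  · exact ⟨s, 0, 1, rfl, by simp [power]⟩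
  rcases eq_or_ne s [] with rfl | hs
  · exact ⟨p, 1, 0, by simp [power], rfl⟩
  rcases le_total p.length s.length with hle | hle
  · obtain ⟨s', rfl⟩ : p <+: s :=
      List.prefix_of_prefix_length_le (h ▸ List.prefix_append p s) (List.prefix_append s p) hle
    have : p.length + s'.length < p.length + (p ++ s').length := by
      simpa using List.length_pos_iff.2 hp
    obtain ⟨r, a, b, rfl, rfl⟩ := exists_power_of_append_comm p s'
      (List.append_cancel_left (h.trans (List.append_assoc _ _ _)))
    exact ⟨r, a, a + b, rfl, (power_add r a b).symm⟩
  · obtain ⟨p', rfl⟩ : s <+: p :=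
      List.prefix_of_prefix_length_le (h ▸ List.prefix_append s p) (List.prefix_append p s) hle
    have : p'.length + s.length < (s ++ p').length + s.length := by
      simpa using List.length_pos_iff.2 hs
    obtain ⟨r, a, b, rfl, rfl⟩ := exists_power_of_append_comm p' s
      (List.append_cancel_left ((List.append_assoc _ _ _).symm.trans h))
    exact ⟨r, b + a, b, (power_add r b a).symm, rfl⟩
termination_by p.length + s.length

lemma Primitive.eq_nil_or_eq_nil_of_append_comm {p s : List α} (hw : Primitive (p ++ s))
    (h : p ++ s = s ++ p) : p = [] ∨ s = [] := by
  obtain ⟨r, a, b, rfl, rfl⟩ := exists_power_of_append_comm p s h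
  by_contra! hne
  have ha : a ≠ 0 := by rintro rfl; exact hne.1 rfl
  have hb : b ≠ 0 := by rintro rfl; exact hne.2 rfl
  have hr : 0 < r.length := List.length_pos_iff.2 (by rintro rfl; exact hne.1 (power_nil a))
  have hlen := congrArg List.length (hw r (a + b) (by omega) (power_add r a b).symm)
  rw [List.length_append, length_power, length_power] at hlen
  nlinarith [Nat.one_le_iff_ne_zero.2 ha, Nat.one_le_iff_ne_zero.2 hb]

section LinearOrder

variable [LinearOrder α]

lemma le_of_append_le_append_left {s x y : List α} (h : s ++ x ≤ s ++ y) : x ≤ y :=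
  le_of_not_gt fun hyx => h.not_gt (List.append_left_lt hyx)

lemma append_lt_append_of_lt_of_not_prefix {u v : List α} (h : u < v) (hp : ¬ u <+: v)
    (x y : List α) : u ++ x < v ++ y := by
  induction h with
  | nil => exact absurd List.nil_prefix hp
  | rel hab => exact List.Lex.rel hab
  | cons _ ih => exact List.Lex.cons (ih fun ⟨t, ht⟩ => hp ⟨t, by rw [List.cons_append, ht]⟩)

lemma le_of_append_le_append_of_length_eq {a b x y : List α} (hl : a.length = b.length)
    (h : a ++ x ≤ b ++ y) : a ≤ b :=
  le_of_not_gt fun hba => h.not_gt <|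
    append_lt_append_of_lt_of_not_prefix hba (fun hp => hba.ne (hp.eq_of_length hl.symm)) y x

lemma foldr_min_le_of_mem (init : α) {x : α} : ∀ {l : List α}, x ∈ l → l.foldr min init ≤ x
  | _ :: _, .head _ => min_le_left _ _
  | _ :: _, .tail _ hx => (min_le_right _ _).trans (foldr_min_le_of_mem init hx)

lemma SelfMinimal.le_drop_append_take {w : List α} (hw : SelfMinimal w) {i : ℕ}
    (hi : i < w.length) : w ≤ w.drop i ++ w.take i := by
  have h := foldr_min_le_of_mem w (List.mem_map_of_mem (f := rot w) (List.mem_range.2 hi))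
  rwa [← minrot, hw, rot, Nat.mod_eq_of_lt hi] at h

lemma nil_lt_of_ne_nil {l : List α} (hl : l ≠ []) : [] < l := by
  obtain ⟨a, l, rfl⟩ := List.exists_cons_of_ne_nil hl
  exact List.nil_lt_cons a l

lemma IsLyndon.lt_of_isSuffix {w s : List α} (hw : IsLyndon w) (hsw : s <:+ w) (hne : s ≠ w)
    (hs : s ≠ []) : w < s := by
  obtain ⟨-, hprim, hmin⟩ := hw
  obtain ⟨p, rfl⟩ := hsw
  have hp : p ≠ [] := by rintro rfl; exact hne rfl
  have hsp : p ++ s ≤ s ++ p := by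
    simpa using hmin.le_drop_append_take (i := p.length) (by simpa using List.length_pos_iff.2 hs)
  by_cases hpre : s <+: p ++ s
  · obtain ⟨t, hst⟩ := hpre
    have hlen : t.length = p.length := by
      have := congrArg List.length hst
      simp only [List.length_append] at this
      omega
    have htp : t ≤ p := le_of_append_le_append_left (hst ▸ hsp)
    have hts : p ++ s ≤ t ++ s := by
      have := hmin.le_drop_append_take (i := s.length) (by simpa using List.length_pos_iff.2 hp)
      simpa [← hst] using this
    have hpt : p ≤ t := le_of_append_le_append_of_length_eq hlen.symm hts
    have hcomm : p ++ s = s ++ p := by rw [← hst, le_antisymm htp hpt]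
    exact absurd (hprim.eq_nil_or_eq_nil_of_append_comm hcomm) (by simp [hp, hs])
  · refine lt_of_not_ge fun hle => hsp.not_gt ?_
    have hlt : s < p ++ s := hle.lt_of_ne hne
    simpa using append_lt_append_of_lt_of_not_prefix hlt hpre p []

lemma IsLyndon.power_lt_of_isPrefix {u v : List α} (hv : IsLyndon v) (huv : u <+: v)
    (hne : u ≠ v) (k : ℕ) : power u k < v := by
  obtain ⟨z, rfl⟩ := huv
  have hz : z ≠ [] := by rintro rfl; simp at hne
  rcases eq_or_ne u [] with rfl | hu
  · simpa using nil_lt_of_ne_nil hz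
  have hvz : u ++ z < z := hv.lt_of_isSuffix (List.suffix_append u z) (by simpa using hu) hz
  induction k with
  | zero => exact nil_lt_of_ne_nil (by simp [hu])
  | succ k ih => rw [power_succ]; exact List.append_left_lt (ih.trans hvz)

lemma IsLyndon.power_lt_power_of_lt {u v : List α} (hv : IsLyndon v) (huv : u < v) (a : ℕ)
    {b : ℕ} (hb : 0 < b) : power u a < power v b := by
  obtain ⟨b, rfl⟩ := Nat.exists_eq_add_of_lt hb
  rw [power_succ]
  by_cases hpre : u <+: v
  -- core's `List.le_append_left` is stated for core's `≤ := ¬ >`, not Mathlib's lexicographic `≤`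
  · exact (hv.power_lt_of_isPrefix hpre huv.ne a).trans_le (le_of_not_gt List.le_append_left)
  · cases a with
    | zero => exact nil_lt_of_ne_nil (by simp [hv.1])
    | succ a => rw [power_succ]; exact append_lt_append_of_lt_of_not_prefix huv hpre _ _

end LinearOrder

theorem stmt_4_general [LinearOrder α]
    (n : ℕ) (hn : 1 ≤ n) (l1 l2 : List α)
    (h2 : IsLyndon l2)
    (hd2 : l2.length ∣ n)
    (hlt : l1 < l2) :
    power l1 (n / l1.length) < power l2 (n / l2.length) :=
  h2.power_lt_power_of_lt hlt _ (Nat.div_pos (Nat.le_of_dvd hn hd2) (List.length_pos_iff.2 h2.1))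

/-- For Lyndon words `λ₁, λ₂` with lengths dividing `n ≥ 1`, if `λ₁ < λ₂` then
`λ₁^(n/|λ₁|) < λ₂^(n/|λ₂|)`. -/
theorem stmt_4 [LinearOrder α] [Fintype α] [Nonempty α]
    (n : ℕ) (hn : 1 ≤ n) (l1 l2 : List α)
    (h1 : IsLyndon l1) (h2 : IsLyndon l2)
    (hd1 : l1.length ∣ n) (hd2 : l2.length ∣ n)
    (hlt : l1 < l2) :
    power l1 (n / l1.length) < power l2 (n / l2.length) :=
  stmt_4_general n hn l1 l2 h2 hd2 hlt

end Lyndon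
end

section
/- Let w be a self-minimal word of length n ≥ 1 over Σ, and let A be the deterministic automaton for w with states {0, 1, ..., n-1} ∪ {AC}, initial state 0, and transition function δ given by: δ(AC, c) = AC for all c ∈ Σ; and for 0 ≤ i ≤ n-1, δ(i, c) = 0 if c > w[i+1], δ(i, c) = i+1 if c = w[i+1] and i ≠ n-1, and δ(i, c) = AC otherwise (i.e., if c < w[i+1], or c = w[i+1] and i = n-1). Let δ* denote the extension of δ to words (reading letters left to right). Then for every word x over Σ: if x ∈ L(w) then δ*(0, x) = AC; otherwise δ*(0, x) = i, where w_(i) is the longest prefix of w that is a suffix of x. -/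
namespace Lyndon

variable {α : Type*}

/-- The transition function of the automaton `A` for `w`: states are `0, …, |w|-1`
together with the accepting state `AC`, represented by `|w|`. -/
def delta [LinearOrder α] (w : List α) (q : ℕ) (c : α) : ℕ :=
  if h : q < w.length then
    if w.get ⟨q, h⟩ < c then 0
    else if c = w.get ⟨q, h⟩ ∧ q ≠ w.length - 1 then q + 1
    else w.length
  else w.length

/-- The extension of `delta` to words (reading letters left to right). -/
def deltaStar [LinearOrder α] (w : List α) (q : ℕ) (x : List α) : ℕ :=
  x.foldl (delta w) q

/-!
Reading `x ∉ L(w)`, the automaton keeps in its state `q` the length of the longest prefix of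
`w` that is a suffix of `x`, as in Knuth–Morris–Pratt, but it never has to consult a failure
function. Self-minimality gives: if `w_(i)` is a suffix of `w_(q)` then `w[i+1] ≤ w[q+1]`, since
otherwise the rotation of `w` starting at position `q - i` would be smaller than `w`. Hence a
letter `c > w[q+1]` extends none of the shorter candidates either, and the state drops to `0`,
while a letter `c < w[q+1]` (or `c = w[n]` at `q = n - 1`) completes a factor from `Pref₋(w)`.
Conversely, any factor from `Pref₋(w)` ending at the last letter is such an extension of a
prefix `w_(i)` with `i ≤ q`, so the same inequality shows the automaton accepts exactly then.
-/

theorem _root_.List.foldr_min_le_of_mem {β : Type*} [LinearOrder β] (b : β) {l : List β}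
    {a : β} (ha : a ∈ l) : l.foldr min b ≤ a := by
  induction l with
  | nil => cases ha
  | cons h t ih =>
    rcases List.mem_cons.1 ha with rfl | ha
    · exact min_le_left _ _
    · exact (min_le_right _ _).trans (ih ha)

theorem _root_.List.concat_suffix_concat_iff {l₁ l₂ : List α} {a b : α} :
    l₁ ++ [a] <:+ l₂ ++ [b] ↔ l₁ <:+ l₂ ∧ a = b := by
  simpa using List.suffix_append_inj_of_length_eq (l₁ := l₁) (l₂ := l₂) (s₁ := [a]) (s₂ := [b]) rfl

section Rotation

variable {w : List α}

theorem getElem_rot {c j : ℕ} (hc : c < w.length) (hj : j < w.length - c) :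
    (rot w c)[j]'(by simp [rot]; omega) = w[c + j] := by
  simp only [rot, Nat.mod_eq_of_lt hc]
  rw [List.getElem_append_left (by simpa using hj), List.getElem_drop]

variable [LinearOrder α]

theorem SelfMinimal.le_rot (hsm : SelfMinimal w) {c : ℕ} (hc : c < w.length) :
    w ≤ rot w c := by
  calc w = minrot w := hsm.symm
    _ ≤ rot w c := List.foldr_min_le_of_mem w (List.mem_map.2 ⟨c, List.mem_range.2 hc, rfl⟩)

theorem SelfMinimal.getElem_le_of_take_suffix_take (hsm : SelfMinimal w) {i q : ℕ}
    (hq : q < w.length) (hiq : i ≤ q) (h : w.take i <:+ w.take q) :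
    w[i] ≤ w[q] := by
  obtain ⟨c, rfl⟩ : ∃ c, q = c + i := ⟨q - i, by omega⟩
  by_contra! hlt
  have hrot : ∀ j (hj : j < w.length - c), (rot w c)[j]'(by simp [rot]; omega) = w[c + j] :=
    fun j hj => getElem_rot (by omega) hj
  have hborder : ∀ j (hj : j < i), w[c + j] = w[j] := fun j hj => by
    have := h.getElem (i := j) (by simp; omega)
    simp only [List.length_take, List.getElem_take] at this
    rw [this]
    congr 1
    omega
  refine not_lt.2 (hsm.le_rot (c := c) (by omega)) (List.lt_iff_exists.2 (Or.inr ?_))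
  refine ⟨i, by simp [rot]; omega, by omega, fun j hj => ?_, ?_⟩
  · rw [hrot j (by omega), hborder j hj]
  · rwa [hrot i (by omega)]

end Rotation

section Automaton

variable [LinearOrder α] {w : List α}

theorem delta_length (c : α) : delta w w.length c = w.length := by
  simp [delta]

theorem delta_eq_length_iff {q : ℕ} (hq : q < w.length) (c : α) :
    delta w q c = w.length ↔ c < w[q] ∨ c = w[q] ∧ q = w.length - 1 := by
  simp only [delta, dif_pos hq, List.get_eq_getElem]
  split_ifs with hlt heq
  · refine ⟨fun h => by omega, ?_⟩
    rintro (h | ⟨rfl, -⟩)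
    · exact absurd hlt (not_lt.2 h.le)
    · exact absurd hlt (lt_irrefl _)
  · refine ⟨fun h => by omega, ?_⟩
    rintro (h | ⟨-, h⟩)
    · exact absurd heq.1 h.ne
    · exact absurd h heq.2
  · simp only [true_iff]
    rcases lt_or_eq_of_le (not_lt.1 hlt) with h | h
    · exact Or.inl h
    · exact Or.inr ⟨h, by_contra fun h' => heq ⟨h, h'⟩⟩

theorem deltaStar_append_singleton (q : ℕ) (x : List α) (c : α) :
    deltaStar w q (x ++ [c]) = delta w (deltaStar w q x) c := by
  simp [deltaStar]

end Automaton

section Language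

variable {w x y : List α}

/-- The meaning of a non-accepting state `q` of the automaton after reading `x`. -/
def IsLongestPrefixSuffix (w x : List α) (q : ℕ) : Prop :=
  q < w.length ∧ w.take q <:+ x ∧ ∀ j ≤ w.length, w.take j <:+ x → j ≤ q

theorem isLongestPrefixSuffix_nil (hw : w ≠ []) : IsLongestPrefixSuffix w [] 0 := by
  refine ⟨List.length_pos_iff.2 hw, by simp, fun j _ hj => ?_⟩
  simpa [hw] using List.suffix_nil.1 hj

variable [LinearOrder α]

theorem InL.mono (h : InL w x) (hxy : x <:+: y) : InL w y :=
  let ⟨z, hz, hzx⟩ := h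
  ⟨z, hz, hzx.trans hxy⟩

theorem inL_nil_iff : InL w [] ↔ w = [] := by
  constructor
  · rintro ⟨z, hz | hz, hzn⟩
    · obtain ⟨i, s, -, rfl⟩ := hz
      simp at hzn
    · rwa [List.infix_nil, hz] at hzn
  · rintro rfl
    exact ⟨[], Or.inr rfl, List.infix_refl []⟩

namespace IsLongestPrefixSuffix

variable {q : ℕ} (hsm : SelfMinimal w) (hq : IsLongestPrefixSuffix w y q)
include hsm hq

theorem getElem_le {i : ℕ} (hi : i < w.length) (hiy : w.take i <:+ y) :
    i ≤ q ∧ w[i] ≤ w[q]'hq.1 := by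
  have hiq := hq.2.2 i hi.le hiy
  refine ⟨hiq, hsm.getElem_le_of_take_suffix_take hq.1 hiq ?_⟩
  exact List.suffix_of_suffix_length_le hiy hq.2.1 (by simp; omega)

theorem inL_append_singleton_iff (hy : ¬InL w y) (c : α) :
    InL w (y ++ [c]) ↔ c < w[q]'hq.1 ∨ c = w[q]'hq.1 ∧ q = w.length - 1 := by
  have hqlt := hq.1
  have hw : w.take (w.length - 1) ++ [w[w.length - 1]] = w := by
    rw [List.take_concat_get', Nat.sub_add_cancel (by omega), List.take_length]
  constructor
  · rintro ⟨z, hz, hzy⟩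
    have hzs : z <:+ y ++ [c] :=
      (List.infix_concat_iff.1 hzy).resolve_right fun h => hy ⟨z, hz, h⟩
    rcases hz with ⟨i, s, hs, rfl⟩ | hz
    · obtain ⟨hiy, rfl⟩ := List.concat_suffix_concat_iff.1 hzs
      exact Or.inl (hs.trans_le (hq.getElem_le hsm i.2 hiy).2)
    · rw [hz, ← hw] at hzs
      obtain ⟨hiy, rfl⟩ := List.concat_suffix_concat_iff.1 hzs
      have hq' : q = w.length - 1 := le_antisymm (by omega)
        (hq.getElem_le hsm (by omega) hiy).1
      subst hq'
      exact Or.inr ⟨rfl, rfl⟩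
  · rintro (hlt | ⟨rfl, hqn⟩)
    · exact ⟨w.take q ++ [c], Or.inl ⟨⟨q, hqlt⟩, c, hlt, rfl⟩,
        (List.suffix_append_self_iff.2 hq.2.1).isInfix⟩
    · subst hqn
      have h : w.take (w.length - 1) ++ [w[w.length - 1]] <:+: y ++ [w[w.length - 1]] :=
        (List.suffix_append_self_iff.2 hq.2.1).isInfix
      rw [hw] at h
      exact ⟨w, Or.inr rfl, h⟩

theorem append_singleton {c : α} (hc : delta w q c ≠ w.length) :
    IsLongestPrefixSuffix w (y ++ [c]) (delta w q c) := by
  have hext : ∀ j (hj : j < w.length), w.take (j + 1) <:+ y ++ [c] →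
      j ≤ q ∧ c ≤ w[q]'hq.1 := fun j hj hjy => by
    rw [← List.take_concat_get' _ _ hj] at hjy
    obtain ⟨htake, rfl⟩ := List.concat_suffix_concat_iff.1 hjy
    exact hq.getElem_le hsm hj htake
  have hqlt := hq.1
  simp only [delta, dif_pos hqlt, List.get_eq_getElem] at hc ⊢
  split_ifs at hc ⊢ with hlt heq
  · refine ⟨by omega, by simp, fun j hj hjy => ?_⟩
    obtain _ | j := j
    · rfl
    · exact absurd hlt (not_lt.2 (hext j (by omega) hjy).2)
  · refine ⟨by omega, ?_, fun j hj hjy => ?_⟩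
    · rw [← List.take_concat_get' _ _ hqlt, ← heq.1]
      exact List.suffix_append_self_iff.2 hq.2.1
    · obtain _ | j := j
      · omega
      · exact Nat.succ_le_succ (hext j (by omega) hjy).1
  · exact absurd rfl hc

end IsLongestPrefixSuffix

end Language

theorem stmt_12_general [LinearOrder α]
    (w : List α) (n : ℕ) (hw : w.length = n) (hsm : SelfMinimal w)
    (x : List α) :
    (InL w x → deltaStar w 0 x = n) ∧
    (¬ InL w x →
      deltaStar w 0 x < n ∧
      w.take (deltaStar w 0 x) <:+ x ∧
      ∀ j ≤ n, w.take j <:+ x → j ≤ deltaStar w 0 x) := by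
  subst hw
  induction x using List.reverseRecOn with
  | nil =>
    refine ⟨fun h => ?_, fun h => isLongestPrefixSuffix_nil (mt inL_nil_iff.2 h)⟩
    simp [deltaStar, inL_nil_iff.1 h]
  | append_singleton y c ih =>
    rw [deltaStar_append_singleton]
    by_cases hy : InL w y
    · rw [ih.1 hy, delta_length]
      exact ⟨fun _ => rfl, fun h => absurd (hy.mono (List.prefix_append y [c]).isInfix) h⟩
    · have hq : IsLongestPrefixSuffix w y (deltaStar w 0 y) := ih.2 hy
      rw [hq.inL_append_singleton_iff hsm hy, ← delta_eq_length_iff hq.1]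
      exact ⟨id, hq.append_singleton hsm⟩

/-- For self-minimal `w` of length `n ≥ 1` and any word `x`: if `x ∈ L(w)` then the
automaton ends in `AC` after reading `x`; otherwise it ends in the state `i` such that
`w_(i)` is the longest prefix of `w` that is a suffix of `x`. -/
theorem stmt_12 [LinearOrder α] [Fintype α] [Nonempty α]
    (w : List α) (n : ℕ) (hn : 1 ≤ n) (hw : w.length = n) (hsm : SelfMinimal w)
    (x : List α) :
    (InL w x → deltaStar w 0 x = n) ∧
    (¬ InL w x →
      deltaStar w 0 x < n ∧
      w.take (deltaStar w 0 x) <:+ x ∧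
      ∀ j ≤ n, w.take j <:+ x → j ≤ deltaStar w 0 x) :=
  stmt_12_general w n hw hsm x

end Lyndon
end
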